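/- arXiv:2004.06013 — 2 statements merged into one kernel-verified Lean document; each statement's English description precedes it below -/
import Mathlib

section
/- Let V be an n-dimensional real normed space with closed unit ball B. Then there exists a linear isomorphism A : V → ℝ^n such that ‖A v‖_{l_2^n} ≤ ‖v‖_V ≤ √n · ‖A v‖_{l_2^n} for all v ∈ V. -/
open Module RealInnerProductSpace

noncomputable section

variable {n : ℕ}

/-- Coordinatewise scaling on Euclidean space. -/
def dmap (d : Fin n → ℝ) : EuclideanSpace ℝ (Fin n) →ₗ[ℝ] EuclideanSpace ℝ (Fin n) where
  toFun y := WithLp.toLp 2 (fun i => d i * y i)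
  map_add' y z := by ext i; simp [mul_add]
  map_smul' c y := by ext i; simp [smul_eq_mul]; ring

@[simp] lemma dmap_apply (d : Fin n → ℝ) (y : EuclideanSpace ℝ (Fin n)) (i : Fin n) :
    dmap d y i = d i * y i := rfl

lemma dmap_det (d : Fin n → ℝ) : LinearMap.det (dmap d) = ∏ i, d i := by
  classical
  rw [← LinearMap.det_toMatrix (PiLp.basisFun 2 ℝ (Fin n))]
  have : LinearMap.toMatrix (PiLp.basisFun 2 ℝ (Fin n)) (PiLp.basisFun 2 ℝ (Fin n)) (dmap d)
      = Matrix.diagonal d := by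
    ext i j
    rw [LinearMap.toMatrix_apply, PiLp.basisFun_repr]
    simp [PiLp.basisFun_apply, Matrix.diagonal, Pi.single_apply]
  rw [this, Matrix.det_diagonal]

variable (hn1 : 1 ≤ n)

local notation "E" => EuclideanSpace ℝ (Fin n)

lemma exists_onb (w : E) (hw : ‖w‖ = 1) (h0 : 0 < n) :
    ∃ B : OrthonormalBasis (Fin n) ℝ E, B ⟨0, h0⟩ = w := by
  have hcard : finrank ℝ E = Fintype.card (Fin n) := by simp
  have horth : Orthonormal ℝ (Set.restrict {(⟨0, h0⟩ : Fin n)} (fun _ => w)) := by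
    constructor
    · intro i; simpa [Set.restrict] using hw
    · intro i j hij
      exfalso
      refine absurd ?_ hij
      have hi := i.2; have hj := j.2
      simp only [Set.mem_singleton_iff] at hi hj
      exact Subtype.ext (hi.trans hj.symm)
  obtain ⟨B, hB⟩ := horth.exists_orthonormalBasis_extension_of_card_eq hcard
  exact ⟨B, hB _ rfl⟩

variable (h0 : 0 < n) (a b : ℝ) (B : OrthonormalBasis (Fin n) ℝ (EuclideanSpace ℝ (Fin n)))

def rmap (h0 : 0 < n) (a b : ℝ) (B : OrthonormalBasis (Fin n) ℝ (EuclideanSpace ℝ (Fin n))) :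
    EuclideanSpace ℝ (Fin n) →ₗ[ℝ] EuclideanSpace ℝ (Fin n) :=
  (B.repr.symm.toLinearEquiv.toLinearMap) ∘ₗ
    (dmap (fun i => if i = ⟨0, h0⟩ then a else b)) ∘ₗ B.repr.toLinearEquiv.toLinearMap

lemma rmap_apply (y : EuclideanSpace ℝ (Fin n)) :
    rmap h0 a b B y = (a * (inner ℝ (B ⟨0, h0⟩) y : ℝ)) • B ⟨0, h0⟩
      + b • (y - (inner ℝ (B ⟨0, h0⟩) y : ℝ) • B ⟨0, h0⟩) := by
  apply B.repr.injective
  rw [rmap]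
  ext i
  simp only [LinearMap.coe_comp, Function.comp_apply, LinearEquiv.coe_coe,
    LinearIsometryEquiv.coe_toLinearEquiv, map_add, map_smul, map_sub,
    LinearIsometryEquiv.apply_symm_apply, B.repr_self]
  rcases eq_or_ne i ⟨0, h0⟩ with h | h
  · subst h
    simp [B.repr_apply_apply, EuclideanSpace.single_apply]
  · simp [B.repr_apply_apply, EuclideanSpace.single_apply, h, Ne.symm h]

lemma rmap_det : LinearMap.det (rmap h0 a b B) = a * b ^ (n - 1) := by
  classical
  rw [rmap, LinearMap.det_comp, LinearMap.det_comp]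
  have h1 : LinearMap.det (B.repr.symm.toLinearEquiv.toLinearMap)
      * LinearMap.det (B.repr.toLinearEquiv.toLinearMap) = 1 := by
    rw [← LinearMap.det_comp]
    have : (B.repr.symm.toLinearEquiv.toLinearMap) ∘ₗ B.repr.toLinearEquiv.toLinearMap
        = LinearMap.id := by ext x; simp
    rw [this, LinearMap.det_id]
  have h2 : LinearMap.det (dmap (fun i => if i = ⟨0, h0⟩ then a else b)) = a * b ^ (n-1) := by
    rw [dmap_det]
    rw [← Finset.mul_prod_erase Finset.univ _ (Finset.mem_univ (⟨0, h0⟩ : Fin n))]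
    simp only [if_pos rfl]
    congr 1
    rw [Finset.prod_ite_of_false, Finset.prod_const, Finset.card_erase_of_mem (Finset.mem_univ _)]
    · simp
    · intro i hi; exact (Finset.mem_erase.mp hi).1
  calc LinearMap.det (B.repr.symm.toLinearEquiv.toLinearMap)
      * (LinearMap.det (dmap (fun i => if i = ⟨0, h0⟩ then a else b))
        * LinearMap.det (B.repr.toLinearEquiv.toLinearMap))
      = (LinearMap.det (B.repr.symm.toLinearEquiv.toLinearMap)
        * LinearMap.det (B.repr.toLinearEquiv.toLinearMap))
        * LinearMap.det (dmap (fun i => if i = ⟨0, h0⟩ then a else b)) := by ring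
    _ = a * b ^ (n-1) := by rw [h1, h2, one_mul]

/-- Core quadratic inequality for John's ellipsoid argument. -/
lemma john_core {c a b τ : ℝ} (ha : 1 ≤ a) (hb : 0 ≤ b) (hτ0 : 0 ≤ τ) (hτ1 : τ ≤ 1)
    (hc : 1 < c) (hkey : a ^ 2 + b ^ 2 * (c ^ 2 - 1) ≤ c ^ 2) :
    ∃ s : ℝ, 0 ≤ s ∧ s ≤ 1 ∧ (a * τ - s * c) ^ 2 + b ^ 2 * (1 - τ ^ 2) ≤ (1 - s) ^ 2 := by
  have hc0 : (0:ℝ) < c := by linarith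
  have hK : (0:ℝ) < c ^ 2 - 1 := by nlinarith
  have hb1 : b ^ 2 ≤ 1 := by nlinarith
  have hac : a ≤ c := by nlinarith [sq_nonneg (a - c), sq_nonneg (a + c)]
  have ha0 : (0:ℝ) < a := by linarith
  by_cases h : a * c * τ ≤ 1
  · refine ⟨0, le_refl _, zero_le_one, ?_⟩
    have hs1 : (a^2 - b^2) * τ^2 ≤ c^2 * (1 - b^2) * τ^2 := by nlinarith [sq_nonneg τ]
    have hs2 : c^2 * τ^2 * a^2 ≤ 1 := by nlinarith [mul_nonneg (mul_nonneg ha0.le hc0.le) hτ0]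
    have hct : c^2 * τ^2 ≤ 1 := by
      have h8 : c^2*τ^2*1 ≤ c^2*τ^2*a^2 := mul_le_mul_of_nonneg_left (by nlinarith) (by positivity)
      nlinarith
    have hs3 : c^2 * (1 - b^2) * τ^2 ≤ (1 - b^2) := by
      nlinarith [mul_le_mul_of_nonneg_left hct (sub_nonneg.2 hb1)]
    nlinarith
  · push_neg at h
    set s := (a * c * τ - 1) / (c ^ 2 - 1) with hs
    have hs0 : 0 ≤ s := by
      apply div_nonneg _ hK.le; linarith
    have hs1 : s ≤ 1 := by
      rw [hs, div_le_one hK]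
      nlinarith [mul_le_mul_of_nonneg_left hτ1 (mul_nonneg ha0.le hc0.le),
        mul_le_mul_of_nonneg_right hac hc0.le]
    refine ⟨s, hs0, hs1, ?_⟩
    have key2 : (c^2-1) * ((1-s)^2 - (a*τ-s*c)^2 - b^2*(1-τ^2))
        = (a*τ-c)^2 - (c^2-1)*b^2*(1-τ^2) := by
      rw [hs]; field_simp; ring
    have h3 : (c^2-1)*b^2*(1-τ^2) ≤ (c^2 - a^2)*(1-τ^2) :=
      mul_le_mul_of_nonneg_right (by nlinarith) (by nlinarith)
    have h4 : (c^2 - a^2)*(1-τ^2) ≤ (a*τ-c)^2 := by nlinarith [sq_nonneg (a - c*τ)]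
    have h5 : 0 ≤ (c^2-1) * ((1-s)^2 - (a*τ-s*c)^2 - b^2*(1-τ^2)) := by rw [key2]; linarith
    have h6 : 0 ≤ (1-s)^2 - (a*τ-s*c)^2 - b^2*(1-τ^2) :=
      (mul_nonneg_iff_of_pos_left hK).mp h5
    linarith

/-- Choice of the dilation coefficients with determinant gain. -/
lemma john_coeff (m : ℕ) {K : ℝ} (hK : (m : ℝ) < K) (hK0 : 0 < K) :
    ∃ A B : ℝ, 1 ≤ A ∧ 0 ≤ B ∧ A + B * K = 1 + K ∧ 1 < A * B ^ m := by
  set δ : ℝ := (K - m) / (2 * m + 1) with hδ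
  have hm0 : (0:ℝ) ≤ m := Nat.cast_nonneg m
  have hδ0 : 0 < δ := by apply div_pos (by linarith) (by linarith)
  have hδK : δ ≤ K := by
    rw [hδ, div_le_iff₀ (by linarith)]; nlinarith
  have hδK1 : δ / K ≤ 1 := by rw [div_le_one hK0]; exact hδK
  refine ⟨1 + δ, 1 - δ / K, by linarith, by linarith, by field_simp; ring, ?_⟩
  have hbern : 1 + (m : ℝ) * (-(δ/K)) ≤ (1 + (-(δ/K))) ^ m := by
    apply one_add_mul_le_pow; linarith
  have h2 : (1 + δ) * (1 - (m:ℝ) * (δ/K)) ≤ (1 + δ) * (1 - δ/K) ^ m := by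
    have h6 := mul_le_mul_of_nonneg_left hbern (by linarith : (0:ℝ) ≤ 1 + δ)
    calc (1 + δ) * (1 - (m:ℝ) * (δ/K)) = (1 + δ) * (1 + (m : ℝ) * (-(δ/K))) := by ring
    _ ≤ (1 + δ) * (1 + (-(δ/K))) ^ m := h6
    _ = (1 + δ) * (1 - δ/K) ^ m := by ring_nf
  have hmd : (m:ℝ) * δ < K - (m:ℝ) := by
    have he : (m:ℝ) * δ * (2*m+1) = m * (K - m) := by
      rw [hδ]; field_simp
    have h7 : (m:ℝ) * (K - m) < (K - m) * (2*m+1) := by nlinarith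
    nlinarith
  have h1 : 1 < (1 + δ) * (1 - (m:ℝ) * (δ/K)) := by
    have hq : (1+δ)*(1 - (m:ℝ)*(δ/K)) - 1 = δ*(K - m - m*δ)/K := by field_simp; ring
    have hq2 : 0 < δ*(K - (m:ℝ) - m*δ)/K := div_pos (mul_pos hδ0 (by linarith)) hK0
    linarith
  linarith

set_option maxHeartbeats 1000000 in
lemma john_exists (n : ℕ) (h0 : 0 < n) (V : Type*) [NormedAddCommGroup V] [NormedSpace ℝ V]
    [FiniteDimensional ℝ V] (hrank : Module.finrank ℝ V = n) :
    ∃ T : V ≃ₗ[ℝ] EuclideanSpace ℝ (Fin n),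
      (∀ x : EuclideanSpace ℝ (Fin n), ‖T.symm x‖ ≤ ‖x‖) ∧
      (∀ v : V, ‖T v‖ ≤ Real.sqrt n * ‖v‖) := by
  classical
  have hfE : Module.finrank ℝ (EuclideanSpace ℝ (Fin n)) = n := finrank_euclideanSpace_fin
  let e : EuclideanSpace ℝ (Fin n) ≃ₗ[ℝ] V := LinearEquiv.ofFinrankEq _ _ (by rw [hfE, hrank])
  let eS : V →L[ℝ] EuclideanSpace ℝ (Fin n) := LinearMap.toContinuousLinearMap e.symm.toLinearMap
  let φ : (EuclideanSpace ℝ (Fin n) →L[ℝ] V) → ℝ := fun S => |(eS.comp S).det|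
  have hφ : ∀ S : EuclideanSpace ℝ (Fin n) →L[ℝ] V,
      φ S = |LinearMap.det (e.symm.toLinearMap ∘ₗ (S : EuclideanSpace ℝ (Fin n) →ₗ[ℝ] V))| := fun S => rfl
  haveI : FiniteDimensional ℝ (EuclideanSpace ℝ (Fin n) →L[ℝ] V) :=
    (LinearMap.toContinuousLinearMap : (EuclideanSpace ℝ (Fin n) →ₗ[ℝ] V) ≃ₗ[ℝ] (EuclideanSpace ℝ (Fin n) →L[ℝ] V)).finiteDimensional
  have hcont : Continuous φ := by
    have h1 : Continuous fun S : EuclideanSpace ℝ (Fin n) →L[ℝ] V => eS.comp S :=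
      (ContinuousLinearMap.compL ℝ (EuclideanSpace ℝ (Fin n)) V (EuclideanSpace ℝ (Fin n)) eS).continuous
    exact continuous_abs.comp (ContinuousLinearMap.continuous_det.comp h1)
  have hne : (Metric.closedBall (0 : EuclideanSpace ℝ (Fin n) →L[ℝ] V) 1).Nonempty := ⟨0, by simp⟩
  obtain ⟨S, hSmem, hSmax⟩ :=
    (isCompact_closedBall (0 : EuclideanSpace ℝ (Fin n) →L[ℝ] V) 1).exists_isMaxOn hne hcont.continuousOn
  have hfeas : ∀ x : EuclideanSpace ℝ (Fin n), ‖S x‖ ≤ ‖x‖ := by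
    intro x
    have h1 : ‖S‖ ≤ 1 := by simpa using Metric.mem_closedBall.mp hSmem
    calc ‖S x‖ ≤ ‖S‖ * ‖x‖ := S.le_opNorm x
    _ ≤ 1 * ‖x‖ := by gcongr
    _ = ‖x‖ := one_mul _
  -- positivity of the maximum
  have hφpos : 0 < φ S := by
    let f : EuclideanSpace ℝ (Fin n) →L[ℝ] V := LinearMap.toContinuousLinearMap e.toLinearMap
    set ε : ℝ := (‖f‖ + 1)⁻¹ with hε
    have hε0 : 0 < ε := by positivity
    have hmem0 : (ε • f) ∈ Metric.closedBall (0 : EuclideanSpace ℝ (Fin n) →L[ℝ] V) 1 := by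
      rw [Metric.mem_closedBall, dist_zero_right]
      refine ContinuousLinearMap.opNorm_le_bound _ zero_le_one ?_
      intro x
      rw [ContinuousLinearMap.smul_apply, norm_smul, Real.norm_eq_abs, abs_of_pos hε0, one_mul]
      have h1 : ‖f x‖ ≤ ‖f‖ * ‖x‖ := f.le_opNorm x
      have h2 : ε * ‖f‖ ≤ 1 := by
        rw [hε, inv_mul_le_iff₀ (by positivity)]
        linarith [norm_nonneg f]
      calc ε * ‖f x‖ ≤ ε * (‖f‖ * ‖x‖) := by
            exact mul_le_mul_of_nonneg_left h1 hε0.le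
      _ = (ε * ‖f‖) * ‖x‖ := by ring
      _ ≤ 1 * ‖x‖ := mul_le_mul_of_nonneg_right h2 (norm_nonneg x)
      _ = ‖x‖ := one_mul _
    have hcomp : e.symm.toLinearMap ∘ₗ ((ε • f : EuclideanSpace ℝ (Fin n) →L[ℝ] V) : EuclideanSpace ℝ (Fin n) →ₗ[ℝ] V)
        = ε • LinearMap.id := by
      ext x
      simp [f, LinearMap.coe_toContinuousLinearMap]
    have hval : φ (ε • f) = ε ^ n := by
      rw [hφ, hcomp, LinearMap.det_smul, LinearMap.det_id, hfE, mul_one,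
        abs_of_pos (pow_pos hε0 n)]
    have h10 : φ (ε • f) ≤ φ S := hSmax hmem0
    rw [hval] at h10
    exact lt_of_lt_of_le (pow_pos hε0 n) h10
  have hdet : LinearMap.det (e.symm.toLinearMap ∘ₗ (S : EuclideanSpace ℝ (Fin n) →ₗ[ℝ] V)) ≠ 0 := by
    intro h
    rw [hφ, h, abs_zero] at hφpos
    exact lt_irrefl _ hφpos
  let g : EuclideanSpace ℝ (Fin n) ≃ₗ[ℝ] EuclideanSpace ℝ (Fin n) := LinearMap.equivOfDetNeZero _ hdet
  let Sh : EuclideanSpace ℝ (Fin n) ≃ₗ[ℝ] V := g.trans e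
  have hSh : ∀ x : EuclideanSpace ℝ (Fin n), Sh x = S x := by
    intro x
    show e (g x) = S x
    have : g x = e.symm (S x) := rfl
    rw [this, e.apply_symm_apply]
  refine ⟨Sh.symm, ?_, ?_⟩
  · intro x
    rw [LinearEquiv.symm_symm, hSh]
    exact hfeas x
  by_contra hbad
  push_neg at hbad
  obtain ⟨v, hv⟩ := hbad
  have hv0 : v ≠ 0 := by
    rintro rfl
    simp at hv
  have hnv : 0 < ‖v‖ := norm_pos_iff.mpr hv0
  set u : V := ‖v‖⁻¹ • v with hu_def
  have hu : ‖u‖ = 1 := by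
    rw [hu_def, norm_smul, Real.norm_eq_abs, abs_of_pos (inv_pos.mpr hnv)]
    field_simp
  set x : EuclideanSpace ℝ (Fin n) := Sh.symm u with hx_def
  set c : ℝ := ‖x‖ with hc_def
  have hcs : Real.sqrt n < c := by
    have h1 : x = ‖v‖⁻¹ • Sh.symm v := by rw [hx_def, hu_def, map_smul]
    have h2 : c = ‖v‖⁻¹ * ‖Sh.symm v‖ := by
      rw [hc_def, h1, norm_smul, Real.norm_eq_abs, abs_of_pos (inv_pos.mpr hnv)]
    rw [h2]
    calc Real.sqrt n = ‖v‖⁻¹ * (Real.sqrt n * ‖v‖) := by field_simp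
    _ < ‖v‖⁻¹ * ‖Sh.symm v‖ := by
        exact mul_lt_mul_of_pos_left hv (inv_pos.mpr hnv)
  have hsq1 : (1:ℝ) ≤ Real.sqrt n := Real.one_le_sqrt.mpr (by exact_mod_cast h0)
  have hc1 : 1 < c := lt_of_le_of_lt hsq1 hcs
  have hc0 : (0:ℝ) < c := by linarith
  have hcn : (n:ℝ) < c^2 := by
    have h3 : Real.sqrt n ^ 2 = (n:ℝ) := Real.sq_sqrt (by positivity)
    nlinarith [Real.sqrt_nonneg (n:ℝ)]
  have hK0 : (0:ℝ) < c^2 - 1 := by nlinarith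
  have hKn : ((n-1 : ℕ):ℝ) < c^2 - 1 := by
    rw [Nat.cast_sub h0, Nat.cast_one]
    linarith
  obtain ⟨A, Bv, hA1, hB0v, hkeyAB, hgain⟩ := john_coeff (n-1) hKn hK0
  set a : ℝ := Real.sqrt A with ha_def
  set b : ℝ := Real.sqrt Bv with hb_def
  have ha2 : a^2 = A := Real.sq_sqrt (by linarith)
  have hb2 : b^2 = Bv := Real.sq_sqrt hB0v
  have ha1 : 1 ≤ a := Real.one_le_sqrt.mpr hA1
  have hb0 : 0 ≤ b := Real.sqrt_nonneg _
  have hkey : a^2 + b^2*(c^2-1) ≤ c^2 := by rw [ha2, hb2]; linarith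
  have hgain' : 1 < a * b^(n-1) := by
    have h11 : (a * b^(n-1))^2 = A * Bv^(n-1) := by
      rw [mul_pow, ← pow_mul, mul_comm (n-1) 2, pow_mul, ha2, hb2]
    by_contra hle1
    push_neg at hle1
    have hXnn : 0 ≤ a * b^(n-1) := mul_nonneg (Real.sqrt_nonneg A) (pow_nonneg hb0 (n-1))
    have := pow_le_one₀ hXnn hle1 (n := 2)
    rw [h11] at this
    linarith
  set w : EuclideanSpace ℝ (Fin n) := c⁻¹ • x with hw_def
  have hw : ‖w‖ = 1 := by
    rw [hw_def, norm_smul, Real.norm_eq_abs, abs_of_pos (inv_pos.mpr hc0), ← hc_def]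
    field_simp
  have hSx : S x = u := by
    rw [← hSh x, hx_def, Sh.apply_symm_apply]
  have hSwnorm : ‖S w‖ = c⁻¹ := by
    rw [hw_def, map_smul, hSx, norm_smul, Real.norm_eq_abs, abs_of_pos (inv_pos.mpr hc0),
      hu, mul_one]
  obtain ⟨B, hB⟩ := exists_onb w hw h0
  set R := rmap h0 a b B with hR_def
  set Rc := LinearMap.toContinuousLinearMap R with hRc_def
  set S' := S.comp Rc with hS'_def
  have hS'app : ∀ y : EuclideanSpace ℝ (Fin n), S' y = S (R y) := fun y => rfl
  -- the key feasibility estimate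
  have hestim : ∀ y : EuclideanSpace ℝ (Fin n), ‖S (R y)‖ ≤ ‖y‖ := by
    intro y
    rcases eq_or_ne y 0 with rfl | hy
    · simp
    have hr0 : 0 < ‖y‖ := norm_pos_iff.mpr hy
    set r : ℝ := ‖y‖ with hr_def
    set t : ℝ := inner ℝ w y with ht_def
    have ht : |t| ≤ r := by
      have := abs_real_inner_le_norm w y
      rwa [hw, one_mul] at this
    set τ : ℝ := |t| / r with hτ_def
    have hτ0 : 0 ≤ τ := div_nonneg (abs_nonneg t) hr0.le
    have hτ1 : τ ≤ 1 := by rw [hτ_def, div_le_one hr0]; exact ht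
    have hτr : τ * r = |t| := div_mul_cancel₀ _ hr0.ne'
    obtain ⟨s, hs0, hs1, hcore⟩ := john_core ha1 hb0 hτ0 hτ1 hc1 hkey
    set σ : ℝ := if t < 0 then -1 else 1 with hσ_def
    have hσt : σ * |t| = t := by
      rcases lt_or_ge t 0 with h | h
      · rw [hσ_def, if_pos h, abs_of_neg h]; ring
      · rw [hσ_def, if_neg (not_lt.mpr h), abs_of_nonneg h, one_mul]
    have hσsq : σ^2 = 1 := by
      rcases lt_or_ge t 0 with h | h
      · rw [hσ_def, if_pos h]; norm_num
      · rw [hσ_def, if_neg (not_lt.mpr h)]; norm_num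
    set u' : EuclideanSpace ℝ (Fin n) := y - t • w with hu'_def
    have horth : (inner ℝ w u' : ℝ) = 0 := by
      rw [hu'_def, inner_sub_right, real_inner_smul_right, ← ht_def,
        real_inner_self_eq_norm_sq, hw]
      ring
    have hu'sq : ‖u'‖^2 = r^2 - t^2 := by
      have h1 : (inner ℝ y (t • w) : ℝ) = t * t := by
        rw [real_inner_smul_right, real_inner_comm, ← ht_def]
      have h2 : ‖t • w‖^2 = t^2 := by
        rw [norm_smul, hw, mul_one, Real.norm_eq_abs, sq_abs]
      rw [hu'_def, norm_sub_sq_real, h1, h2, ← hr_def]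
      ring
    set z : EuclideanSpace ℝ (Fin n) := (a*t - s*r*c*σ) • w + b • u' with hz_def
    have hzRy : R y = (s*r*c*σ) • w + z := by
      rw [hR_def, rmap_apply, hB, ← ht_def, hz_def, hu'_def]
      module
    have hznorm : ‖z‖^2 = (a*t - s*r*c*σ)^2 + b^2*(r^2 - t^2) := by
      rw [hz_def, norm_add_sq_real]
      have hpq : (inner ℝ ((a*t - s*r*c*σ) • w) (b • u') : ℝ) = 0 := by
        rw [real_inner_smul_left, real_inner_smul_right, horth]; ring
      have hn1 : ‖(a*t - s*r*c*σ) • w‖^2 = (a*t - s*r*c*σ)^2 := by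
        rw [norm_smul, hw, mul_one, Real.norm_eq_abs, sq_abs]
      have hn2 : ‖b • u'‖^2 = b^2 * (r^2 - t^2) := by
        rw [norm_smul, Real.norm_eq_abs, abs_of_nonneg hb0, mul_pow, hu'sq]
      rw [hpq, hn1, hn2]
      ring
    have hzle : ‖z‖ ≤ (1-s)*r := by
      have hat : (a*t - s*r*c*σ)^2 = r^2*(a*τ - s*c)^2 := by
        have h1 : a*t - s*r*c*σ = σ*(a*|t| - s*r*c) := by
          have h1a : σ*(a*|t| - s*r*c) = a*(σ*|t|) - s*r*c*σ := by ring
          rw [h1a, hσt]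
        rw [h1, mul_pow, hσsq, one_mul, ← hτr]
        ring
      have hts : t^2 = τ^2 * r^2 := by
        have : t^2 = |t|^2 := (sq_abs t).symm
        rw [this, ← hτr]; ring
      have hfin : ‖z‖^2 ≤ ((1-s)*r)^2 := by
        rw [hznorm, hat]
        have h12 := mul_le_mul_of_nonneg_left hcore (sq_nonneg r)
        calc r^2*(a*τ - s*c)^2 + b^2*(r^2 - t^2)
            = r^2*((a*τ - s*c)^2 + b^2*(1 - τ^2)) := by rw [hts]; ring
        _ ≤ r^2*(1-s)^2 := h12
        _ = ((1-s)*r)^2 := by ring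
      have hnn : 0 ≤ (1-s)*r := mul_nonneg (sub_nonneg.mpr hs1) hr0.le
      exact (pow_le_pow_iff_left₀ (norm_nonneg z) hnn two_ne_zero).mp hfin
    have hsrc : 0 ≤ s*r*c := by positivity
    have hRdecomp : S (R y) = (s*r*c*σ) • S w + S z := by
      rw [hzRy, map_add, map_smul]
    calc ‖S (R y)‖ ≤ ‖(s*r*c*σ) • S w‖ + ‖S z‖ := by rw [hRdecomp]; exact norm_add_le _ _
    _ = (s*r*c) * ‖S w‖ + ‖S z‖ := by
        have hσabs : |σ| = 1 := by
          rcases lt_or_ge t 0 with h | h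
          · rw [hσ_def, if_pos h]; norm_num
          · rw [hσ_def, if_neg (not_lt.mpr h)]; norm_num
        rw [norm_smul, Real.norm_eq_abs, abs_mul, hσabs, mul_one, abs_of_nonneg hsrc]
    _ ≤ (s*r*c) * c⁻¹ + (1-s)*r := by
        refine add_le_add (le_of_eq (by rw [hSwnorm])) ?_
        exact le_trans (hfeas z) hzle
    _ = s*r + (1-s)*r := by
        congr 1
        field_simp
    _ = r := by ring
  -- membership of the perturbed map
  have hS'mem : S' ∈ Metric.closedBall (0 : EuclideanSpace ℝ (Fin n) →L[ℝ] V) 1 := by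
    rw [Metric.mem_closedBall, dist_zero_right]
    refine ContinuousLinearMap.opNorm_le_bound _ zero_le_one ?_
    intro y
    rw [one_mul, hS'app]
    exact hestim y
  -- determinant computation
  have hcoe : (S' : EuclideanSpace ℝ (Fin n) →ₗ[ℝ] V)
      = (S : EuclideanSpace ℝ (Fin n) →ₗ[ℝ] V) ∘ₗ R := by
    ext yy
    simp [hS'_def, hRc_def]
  have hdet' : φ S' = φ S * (a * b^(n-1)) := by
    rw [hφ, hφ, hcoe, ← LinearMap.comp_assoc, LinearMap.det_comp, abs_mul, hR_def, rmap_det]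
    congr 1
    exact abs_of_pos (by linarith)
  have hle : φ S' ≤ φ S := hSmax hS'mem
  rw [hdet'] at hle
  have hlt : φ S * 1 < φ S * (a * b^(n-1)) := by
    exact mul_lt_mul_of_pos_left hgain' hφpos
  rw [mul_one] at hlt
  linarith

/-- John's ellipsoid theorem: an `n`-dimensional real normed space `V` admits a linear
isomorphism `A : V → ℝ^n` with `‖A v‖₂ ≤ ‖v‖ ≤ √n · ‖A v‖₂` for all `v`. -/
theorem stmt10 (n : ℕ) (V : Type*) [NormedAddCommGroup V] [NormedSpace ℝ V]
    [FiniteDimensional ℝ V] (hn : Module.finrank ℝ V = n) :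
    ∃ A : V ≃ₗ[ℝ] EuclideanSpace ℝ (Fin n),
      ∀ v : V, ‖A v‖ ≤ ‖v‖ ∧ ‖v‖ ≤ Real.sqrt n * ‖A v‖ := by
  rcases Nat.eq_zero_or_pos n with rfl | h0
  · haveI : Subsingleton V := Module.finrank_zero_iff.mp hn
    refine ⟨LinearEquiv.ofFinrankEq V _ (by simp [hn]), fun v => ?_⟩
    have hv : v = (0 : V) := Subsingleton.elim v 0
    subst hv
    simp
  · obtain ⟨T, hT1, hT2⟩ := john_exists n h0 V hn
    have hs1 : (1:ℝ) ≤ Real.sqrt n := Real.one_le_sqrt.mpr (by exact_mod_cast h0)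
    have hs0 : (0:ℝ) < Real.sqrt n := by linarith
    refine ⟨T.trans (LinearEquiv.smulOfNeZero ℝ _ ((Real.sqrt n)⁻¹)
      (inv_ne_zero hs0.ne')), fun v => ?_⟩
    have hA : (T.trans (LinearEquiv.smulOfNeZero ℝ _ ((Real.sqrt n)⁻¹)
        (inv_ne_zero hs0.ne'))) v = (Real.sqrt n)⁻¹ • T v := rfl
    rw [hA, norm_smul, Real.norm_eq_abs, abs_of_pos (inv_pos.mpr hs0)]
    constructor
    · have h1 : ‖T v‖ ≤ Real.sqrt n * ‖v‖ := hT2 v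
      calc (Real.sqrt n)⁻¹ * ‖T v‖ ≤ (Real.sqrt n)⁻¹ * (Real.sqrt n * ‖v‖) :=
            mul_le_mul_of_nonneg_left h1 (inv_pos.mpr hs0).le
      _ = ‖v‖ := by field_simp
    · have h2 : ‖v‖ ≤ ‖T v‖ := by
        have := hT1 (T v)
        rwa [T.symm_apply_apply] at this
      calc ‖v‖ ≤ ‖T v‖ := h2
      _ = Real.sqrt n * ((Real.sqrt n)⁻¹ * ‖T v‖) := by field_simp
end
end

section
/- Let 1 ≤ q < ∞ and 0 ≤ n ≤ N. Then d_n(B_∞^N, l_q^N) = (N - n)^{1/q}, where d_n is the Kolmogorov n-width and B_∞^N the unit cube of l_∞^N. In particular, if n ≤ N/2 then d_n(B_∞^N, l_q^N) ≥ (N/2)^{1/q}. -/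
/-- The `l_q` norm on `ℝ^N`. -/
noncomputable def lqNorm (q : ℝ) {N : ℕ} (x : Fin N → ℝ) : ℝ :=
  (∑ j, |x j| ^ q) ^ (1 / q)

/-- The Kolmogorov `n`-width of `C ⊆ ℝ^N` with respect to the `l_q` norm. -/
noncomputable def lqWidth (q : ℝ) {N : ℕ} (n : ℕ) (C : Set (Fin N → ℝ)) : ℝ :=
  ⨅ L : {L : Submodule ℝ (Fin N → ℝ) // Module.finrank ℝ ↥L ≤ n},
    ⨆ x : C, ⨅ y : ↥(L : Submodule ℝ (Fin N → ℝ)), lqNorm q ((x : Fin N → ℝ) - (y : Fin N → ℝ))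

open Finset Module

/-- pairing as linear map in first argument -/
noncomputable def pairL {N : ℕ} (v : Fin N → ℝ) : (Fin N → ℝ) →ₗ[ℝ] ℝ where
  toFun f := ∑ j, f j * v j
  map_add' f g := by simp [add_mul, Finset.sum_add_distrib]
  map_smul' c f := by simp [Finset.mul_sum, mul_assoc]

lemma exists_annihilator {N n : ℕ} (L : Submodule ℝ (Fin N → ℝ)) (hL : finrank ℝ L ≤ n) :
    ∃ F : Submodule ℝ (Fin N → ℝ), N - n ≤ finrank ℝ F ∧
      ∀ f ∈ F, ∀ y ∈ L, ∑ j, f j * y j = 0 := by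
  classical
  set k := finrank ℝ L with hk
  let b : Basis (Fin k) ℝ L := finBasis ℝ L
  let ψ : (Fin N → ℝ) →ₗ[ℝ] (Fin k → ℝ) :=
    LinearMap.pi fun i => pairL ((b i : Fin N → ℝ))
  refine ⟨LinearMap.ker ψ, ?_, ?_⟩
  · have h1 := LinearMap.finrank_range_add_finrank_ker ψ
    have h2 : finrank ℝ (LinearMap.range ψ) ≤ k := by
      simpa [Module.finrank_fintype_fun_eq_card] using (LinearMap.range ψ).finrank_le
    have h3 : finrank ℝ (Fin N → ℝ) = N := by
      simp [Module.finrank_fintype_fun_eq_card]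
    omega
  · intro f hf y hy
    have hker : ∀ i, ∑ j, f j * (b i : Fin N → ℝ) j = 0 := by
      intro i
      have h := congrFun (LinearMap.mem_ker.1 hf) i
      simpa [ψ, pairL] using h
    have hle : L ≤ LinearMap.ker (pairL f) := by
      have hspan : Submodule.span ℝ (Set.range ((L.subtype : ↥L →ₗ[ℝ] (Fin N → ℝ)) ∘ b)) = L := by
        rw [Set.range_comp, ← Submodule.map_span, b.span_eq, Submodule.map_top,
          Submodule.range_subtype]
      rw [← hspan]
      rw [Submodule.span_le]
      rintro _ ⟨i, rfl⟩
      simp only [SetLike.mem_coe, LinearMap.mem_ker, Function.comp_apply]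
      show ∑ j, (b i : Fin N → ℝ) j * f j = 0
      rw [← hker i]
      exact Finset.sum_congr rfl fun j _ => mul_comm _ _
    have := hle hy
    rw [LinearMap.mem_ker] at this
    show ∑ j, f j * y j = 0
    rw [← this]
    show _ = ∑ j, y j * f j
    exact Finset.sum_congr rfl fun j _ => mul_comm _ _


lemma exists_extreme {N : ℕ} (F : Submodule ℝ (Fin N → ℝ)) (m : ℕ) (hm : m ≤ finrank ℝ F) :
    ∃ f, f ∈ F ∧ (∀ j, |f j| ≤ 1) ∧
      m ≤ (Finset.univ.filter fun j => |f j| = 1).card := by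
  classical
  induction m with
  | zero => exact ⟨0, F.zero_mem, by simp, Nat.zero_le _⟩
  | succ m ih =>
    obtain ⟨f, hfF, hf1, hcard⟩ := ih (le_trans (Nat.le_succ m) hm)
    set S := Finset.univ.filter fun j => |f j| = 1 with hS
    by_cases hdone : m + 1 ≤ S.card
    · exact ⟨f, hfF, hf1, hdone⟩
    have hScard : S.card = m := by omega
    -- subspace of functions vanishing on S
    let φ : (Fin N → ℝ) →ₗ[ℝ] ({j // j ∈ S} → ℝ) :=
      LinearMap.funLeft ℝ ℝ (fun j : {j // j ∈ S} => (j : Fin N))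
    set K := LinearMap.ker φ with hKdef
    have hKmem : ∀ g, g ∈ K ↔ ∀ j ∈ S, g j = 0 := by
      intro g
      constructor
      · intro hg j hj
        exact congrFun (LinearMap.mem_ker.1 hg) ⟨j, hj⟩
      · intro h
        rw [LinearMap.mem_ker]
        funext j
        exact h j.1 j.2
    have hKrank : N - m ≤ finrank ℝ K := by
      rw [hKdef]
      have h1 := LinearMap.finrank_range_add_finrank_ker φ
      have h2 : finrank ℝ (LinearMap.range φ) ≤ m := by
        have := (LinearMap.range φ).finrank_le
        simpa [Module.finrank_fintype_fun_eq_card, Fintype.card_coe, hScard] using this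
      have h3 : finrank ℝ (Fin N → ℝ) = N := by
        simp [Module.finrank_fintype_fun_eq_card]
      omega
    -- find nonzero g in F ⊓ K
    have hrank : 0 < finrank ℝ ↥(F ⊓ K) := by
      have h1 := Submodule.finrank_sup_add_finrank_inf_eq F K
      have h2 : finrank ℝ ↥(F ⊔ K) ≤ N := by
        have := (F ⊔ K).finrank_le
        simpa [Module.finrank_fintype_fun_eq_card] using this
      have h4 : finrank ℝ K ≤ N := by
        have := K.finrank_le
        simpa [Module.finrank_fintype_fun_eq_card] using this
      omega
    have hnt : Nontrivial ↥(F ⊓ K) := Module.finrank_pos_iff.mp hrank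
    obtain ⟨gg, hgne⟩ := exists_ne (0 : ↥(F ⊓ K))
    set g : Fin N → ℝ := (gg : Fin N → ℝ) with hgdef
    have hgF : g ∈ F := gg.2.1
    have hgS : ∀ j ∈ S, g j = 0 := (hKmem g).mp gg.2.2
    have hg0 : g ≠ 0 := by
      intro h
      exact hgne (Subtype.ext h)
    set T := Finset.univ.filter (fun j => g j ≠ 0) with hT
    have hTnonempty : T.Nonempty := by
      by_contra h
      rw [Finset.not_nonempty_iff_eq_empty] at h
      apply hg0
      funext j
      show g j = 0
      by_contra hj
      have : j ∈ T := by simp [hT, hj]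
      simp [h] at this
    set e : Fin N → ℝ := fun j => if 0 < g j then 1 else -1 with he
    set t : Fin N → ℝ := fun j => (e j - f j) / g j with ht
    have ht0 : ∀ j ∈ T, 0 ≤ t j := by
      intro j hj
      have hgj : g j ≠ 0 := by simpa [hT] using hj
      rcases lt_or_gt_of_ne hgj with h | h
      · have hej : e j = -1 := by simp [he, not_lt.mpr h.le, h.ne]
        have h1 : e j - f j ≤ 0 := by
          have := (abs_le.mp (hf1 j)).1
          rw [hej]; linarith
        exact div_nonneg_iff.mpr (Or.inr ⟨h1, h.le⟩)
      · have hej : e j = 1 := by simp [he, h]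
        have h1 : 0 ≤ e j - f j := by
          have := (abs_le.mp (hf1 j)).2
          rw [hej]; linarith
        exact div_nonneg h1 h.le
    obtain ⟨j₀, hj₀T, hj₀min⟩ := T.exists_min_image t hTnonempty
    have hgj₀ : g j₀ ≠ 0 := by simpa [hT] using hj₀T
    set c := t j₀ with hc
    have hc0 : 0 ≤ c := ht0 j₀ hj₀T
    set f' : Fin N → ℝ := f + c • g with hf'
    have habs : ∀ j, |f' j| ≤ 1 := by
      intro j
      by_cases hgj : g j = 0
      · simp [hf', hgj, hf1 j]
      have hjT : j ∈ T := by simp [hT, hgj]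
      have hcj : c ≤ t j := hj₀min j hjT
      have hfj := abs_le.mp (hf1 j)
      have hf'j : f' j = f j + c * g j := by simp [hf']
      rcases lt_or_gt_of_ne hgj with h | h
      · have hej : e j = -1 := by simp [he, not_lt.mpr h.le, h.ne]
        have htj : t j * g j = -1 - f j := by
          rw [ht]; simp only []
          rw [div_mul_cancel₀ _ hgj, hej]
        have h1 : t j * g j ≤ c * g j := mul_le_mul_of_nonpos_right hcj h.le
        have h2 : c * g j ≤ 0 := mul_nonpos_of_nonneg_of_nonpos hc0 h.le
        rw [hf'j]; rw [htj] at h1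
        exact abs_le.mpr ⟨by linarith, by linarith⟩
      · have hej : e j = 1 := by simp [he, h]
        have htj : t j * g j = 1 - f j := by
          rw [ht]; simp only []
          rw [div_mul_cancel₀ _ hgj, hej]
        have h1 : c * g j ≤ t j * g j := mul_le_mul_of_nonneg_right hcj h.le
        have h2 : 0 ≤ c * g j := mul_nonneg hc0 h.le
        rw [hf'j]; rw [htj] at h1
        exact abs_le.mpr ⟨by linarith, by linarith⟩
    refine ⟨f', F.add_mem hfF (F.smul_mem c hgF), habs, ?_⟩
    have hsub : insert j₀ S ⊆ Finset.univ.filter (fun j => |f' j| = 1) := by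
      intro j hj
      rw [Finset.mem_insert] at hj
      rcases hj with rfl | hjS
      · have : f' j = e j := by
          have : c * g j = e j - f j := by
            rw [hc, ht]; simp only []
            rw [div_mul_cancel₀ _ hgj₀]
          simp [hf', this]
        rw [Finset.mem_filter]
        refine ⟨Finset.mem_univ _, ?_⟩
        rw [this, he]
        by_cases h : 0 < g j <;> simp [h]
      · have hgj : g j = 0 := hgS j hjS
        have : f' j = f j := by simp [hf', hgj]
        rw [Finset.mem_filter]
        refine ⟨Finset.mem_univ _, ?_⟩
        rw [this]
        simpa [hS] using hjS
    have hj₀S : j₀ ∉ S := fun h => hgj₀ (hgS j₀ h)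
    have := Finset.card_le_card hsub
    rw [Finset.card_insert_of_notMem hj₀S, hScard] at this
    exact this


lemma lqNorm_nonneg (q : ℝ) {N : ℕ} (x : Fin N → ℝ) : 0 ≤ lqNorm q x :=
  Real.rpow_nonneg (Finset.sum_nonneg fun j _ => Real.rpow_nonneg (abs_nonneg _) q) _

lemma card_lt {N n : ℕ} (hn : n ≤ N) : Fintype.card {j : Fin N // (j : ℕ) < n} = n := by
  have e : {j : Fin N // (j : ℕ) < n} ≃ Fin n :=
    { toFun := fun j => ⟨j.1, j.2⟩
      invFun := fun i => ⟨⟨i.1, lt_of_lt_of_le i.2 hn⟩, i.2⟩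
      left_inv := fun j => by ext; rfl
      right_inv := fun i => by ext; rfl }
  rw [Fintype.card_congr e, Fintype.card_fin]

lemma card_ge {N n : ℕ} (hn : n ≤ N) : Fintype.card {j : Fin N // n ≤ (j : ℕ)} = N - n := by
  have e : {j : Fin N // n ≤ (j : ℕ)} ≃ Fin (N - n) :=
    { toFun := fun j => ⟨(j.1 : ℕ) - n, by have := j.1.isLt; have := j.2; omega⟩
      invFun := fun i => ⟨⟨(i : ℕ) + n, by have := i.isLt; omega⟩, by simp⟩
      left_inv := fun j => by
        ext
        have := j.2
        simp
        omega
      right_inv := fun i => by ext; simp }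
  rw [Fintype.card_congr e, Fintype.card_fin]

lemma lqNorm_le {q : ℝ} (hq : 1 ≤ q) {N : ℕ} (x : Fin N → ℝ) (h1 : ∀ j, |x j| ≤ 1)
    (S : Finset (Fin N)) (hs : ∀ j ∉ S, x j = 0) :
    lqNorm q x ≤ (S.card : ℝ) ^ (1 / q) := by
  have hq0 : q ≠ 0 := by positivity
  apply Real.rpow_le_rpow (Finset.sum_nonneg fun j _ => Real.rpow_nonneg (abs_nonneg _) q)
    ?_ (by positivity)
  rw [← Finset.sum_subset (Finset.subset_univ S)
    (fun j _ hj => by rw [hs j hj]; simp [Real.zero_rpow hq0])]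
  calc ∑ j ∈ S, |x j| ^ q ≤ ∑ _j ∈ S, (1:ℝ) :=
        Finset.sum_le_sum fun j _ =>
          Real.rpow_le_one (abs_nonneg _) (h1 j) (le_trans zero_le_one hq)
    _ = S.card := by simp

lemma key_lower {q : ℝ} (hq : 1 ≤ q) {N : ℕ} (f z : Fin N → ℝ) (hf1 : ∀ j, |f j| ≤ 1)
    (m : ℕ) (hm : (m : ℝ) ≤ ∑ j, |f j|) (hfz : ∑ j, |f j| = ∑ j, f j * z j) :
    (m : ℝ) ^ (1 / q) ≤ lqNorm q z := by
  set A := ∑ j, |f j| with hA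
  have hq0 : (0:ℝ) < q := lt_of_lt_of_le zero_lt_one hq
  have hA0 : 0 ≤ A := Finset.sum_nonneg fun j _ => abs_nonneg _
  rcases eq_or_lt_of_le hA0 with h0 | hApos
  · have hm0 : (m:ℝ) ≤ 0 := by rw [← h0] at hm; exact hm
    have hmz : m = 0 := by exact_mod_cast le_antisymm (by exact_mod_cast hm0) (Nat.zero_le m)
    rw [hmz]
    rw [Nat.cast_zero, Real.zero_rpow (by positivity : (1/q) ≠ 0)]
    exact lqNorm_nonneg q z
  · set B := ∑ j, |z j| ^ q with hB
    have hB0 : 0 ≤ B := Finset.sum_nonneg fun j _ => Real.rpow_nonneg (abs_nonneg _) _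
    have h1 : A ≤ ∑ j, |f j| * |z j| := by
      rw [hfz]
      exact Finset.sum_le_sum fun j _ => (le_abs_self _).trans (le_of_eq (abs_mul _ _))
    have h2 := Real.inner_le_weight_mul_Lp_of_nonneg Finset.univ hq (fun j => |f j|)
      (fun j => |z j|) (fun j => abs_nonneg _) (fun j => abs_nonneg _)
    have h3 : (∑ j, |f j| * |z j| ^ q) ≤ B := Finset.sum_le_sum fun j _ =>
      mul_le_of_le_one_left (Real.rpow_nonneg (abs_nonneg _) _) (hf1 j)
    have h4 : A ≤ A ^ (1 - q⁻¹) * B ^ q⁻¹ := by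
      refine le_trans h1 (le_trans h2 ?_)
      exact mul_le_mul_of_nonneg_left
        (Real.rpow_le_rpow (Finset.sum_nonneg fun j _ =>
          mul_nonneg (abs_nonneg _) (Real.rpow_nonneg (abs_nonneg _) _)) h3
          (by positivity)) (Real.rpow_nonneg hA0 _)
    have h5 : A ^ q⁻¹ ≤ B ^ q⁻¹ := by
      have hpos : (0:ℝ) < A ^ (1 - q⁻¹) := Real.rpow_pos_of_pos hApos _
      rw [← mul_le_mul_iff_of_pos_right hpos]
      have hAA : A ^ q⁻¹ * A ^ (1 - q⁻¹) = A := by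
        rw [← Real.rpow_add hApos]; simp
      rw [hAA]
      calc A ≤ A ^ (1 - q⁻¹) * B ^ q⁻¹ := h4
        _ = B ^ q⁻¹ * A ^ (1 - q⁻¹) := mul_comm _ _
    calc (m:ℝ) ^ (1/q) ≤ A ^ (1/q) :=
          Real.rpow_le_rpow (Nat.cast_nonneg m) hm (by positivity)
      _ = A ^ q⁻¹ := by rw [one_div]
      _ ≤ B ^ q⁻¹ := h5
      _ = lqNorm q z := by rw [lqNorm, one_div]


/-- `d_n(B_∞^N, l_q^N) = (N - n)^{1/q}` for `1 ≤ q < ∞`, `n ≤ N`; in particular,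
if `n ≤ N/2` then `d_n(B_∞^N, l_q^N) ≥ (N/2)^{1/q}`. -/
theorem stmt16 (N n : ℕ) (q : ℝ) (hq : 1 ≤ q) (hn : n ≤ N) :
    lqWidth q n {x : Fin N → ℝ | ∀ j, |x j| ≤ 1}
        = ((N : ℝ) - (n : ℝ)) ^ (1 / q)
      ∧ ((n : ℝ) ≤ (N : ℝ) / 2 →
        ((N : ℝ) / 2) ^ (1 / q) ≤ lqWidth q n {x : Fin N → ℝ | ∀ j, |x j| ≤ 1}) := by
  classical
  have hq0 : (0:ℝ) < q := lt_of_lt_of_le zero_lt_one hq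
  have h1q : (0:ℝ) ≤ 1/q := by positivity
  set C : Set (Fin N → ℝ) := {x | ∀ j, |x j| ≤ 1} with hC
  have hx0C : (0 : Fin N → ℝ) ∈ C := by intro j; simp
  haveI hCne : Nonempty ↥C := ⟨⟨0, hx0C⟩⟩
  haveI hLne : Nonempty {L : Submodule ℝ (Fin N → ℝ) // Module.finrank ℝ ↥L ≤ n} :=
    ⟨⟨⊥, by simp⟩⟩
  suffices key : lqWidth q n C = ((N:ℝ) - n) ^ (1/q) by
    refine ⟨key, fun h2 => ?_⟩
    rw [key]
    exact Real.rpow_le_rpow (by positivity) (by linarith) h1q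
  have hcast : ((N:ℝ) - n) = ((N - n : ℕ) : ℝ) := by
    rw [Nat.cast_sub hn]
  rw [hcast]
  -- lower bound for every iInf term, used in BddBelow arguments
  have hinf_nonneg : ∀ (L : Submodule ℝ (Fin N → ℝ)) (x : ↥C),
      BddBelow (Set.range fun y : ↥L => lqNorm q ((x : Fin N → ℝ) - (y : Fin N → ℝ))) := by
    intro L x
    exact ⟨0, by rintro r ⟨y, rfl⟩; exact lqNorm_nonneg q _⟩
  apply le_antisymm
  · -- upper bound
    set φh : (Fin N → ℝ) →ₗ[ℝ] ({j : Fin N // (j:ℕ) < n} → ℝ) :=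
      LinearMap.funLeft ℝ ℝ (fun i => (i : Fin N)) with hφh
    set φt : (Fin N → ℝ) →ₗ[ℝ] ({j : Fin N // n ≤ (j:ℕ)} → ℝ) :=
      LinearMap.funLeft ℝ ℝ (fun i => (i : Fin N)) with hφt
    set L₀ := LinearMap.ker φt with hL₀
    have hmemL₀ : ∀ g, g ∈ L₀ ↔ ∀ j : Fin N, n ≤ (j:ℕ) → g j = 0 := by
      intro g
      constructor
      · intro hg j hj
        exact congrFun (LinearMap.mem_ker.1 hg) ⟨j, hj⟩
      · intro h
        rw [hL₀, LinearMap.mem_ker]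
        funext i
        exact h i.1 i.2
    have hrank : finrank ℝ L₀ ≤ n := by
      have hinj : Function.Injective (φh.domRestrict L₀) := by
        rw [← LinearMap.ker_eq_bot]
        rw [LinearMap.ker_eq_bot']
        rintro ⟨x, hx⟩ hx0
        ext j
        show x j = 0
        by_cases hj : (j:ℕ) < n
        · exact congrFun hx0 ⟨j, hj⟩
        · exact (hmemL₀ x).1 hx j (not_lt.mp hj)
      have := LinearMap.finrank_le_finrank_of_injective hinj
      rwa [Module.finrank_fintype_fun_eq_card, card_lt hn] at this
    refine le_trans (ciInf_le ⟨0, ?_⟩ (⟨L₀, hrank⟩ :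
        {L : Submodule ℝ (Fin N → ℝ) // Module.finrank ℝ ↥L ≤ n})) ?_
    · rintro r ⟨L, rfl⟩
      exact Real.iSup_nonneg fun x => Real.iInf_nonneg fun y => lqNorm_nonneg q _
    apply ciSup_le
    intro x
    set y₀ : Fin N → ℝ := fun j => if (j:ℕ) < n then (x : Fin N → ℝ) j else 0 with hy₀
    have hy₀L : y₀ ∈ L₀ := by
      rw [hmemL₀]
      intro j hj
      simp [hy₀, not_lt.mpr hj]
    refine le_trans (ciInf_le (hinf_nonneg L₀ x) (⟨y₀, hy₀L⟩ : ↥L₀)) ?_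
    have hS : ((Finset.univ.filter fun j : Fin N => n ≤ (j:ℕ)).card : ℝ) ^ (1/q)
        = ((N - n : ℕ) : ℝ) ^ (1/q) := by
      congr 2
      rw [← Fintype.card_subtype, card_ge hn]
    rw [← hS]
    apply lqNorm_le hq
    · intro j
      by_cases hj : (j:ℕ) < n
      · simp [hy₀, hj]
      · simpa [hy₀, hj] using x.2 j
    · intro j hj
      have hj' : (j:ℕ) < n := by simpa using hj
      simp [hy₀, hj']
  · -- lower bound
    apply le_ciInf
    rintro ⟨L, hL⟩
    haveI : Nonempty ↥L := ⟨⟨0, L.zero_mem⟩⟩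
    obtain ⟨F, hFrank, hFperp⟩ := exists_annihilator L hL
    obtain ⟨f, hfF, hf1, hfcard⟩ := exists_extreme F (N - n) hFrank
    set x₀ : Fin N → ℝ := fun j => if f j < 0 then -1 else if 0 < f j then 1 else 0 with hx₀
    have hx₀C : x₀ ∈ C := by
      intro j
      rw [hx₀]
      dsimp only
      split_ifs <;> simp
    have hfx₀ : ∀ j, f j * x₀ j = |f j| := by
      intro j
      rw [hx₀]
      dsimp only
      rcases lt_trichotomy (f j) 0 with h|h|h
      · rw [if_pos h, abs_of_neg h]; ring
      · simp [h]
      · rw [if_neg (lt_asymm h), if_pos h, abs_of_pos h]; ring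
    have hsum : ((N - n : ℕ) : ℝ) ≤ ∑ j, |f j| := by
      set S := Finset.univ.filter fun j => |f j| = 1 with hSdef
      calc ((N - n : ℕ) : ℝ) ≤ (S.card : ℝ) := by exact_mod_cast hfcard
        _ = ∑ j ∈ S, |f j| := by
            rw [Finset.sum_congr rfl (fun j hj => (Finset.mem_filter.1 hj).2)]
            simp [hSdef]
        _ ≤ ∑ j, |f j| :=
            Finset.sum_le_sum_of_subset_of_nonneg (Finset.subset_univ S)
              fun j _ _ => abs_nonneg _
    have hbddA : BddAbove (Set.range fun x : ↥C =>
        ⨅ y : ↥L, lqNorm q ((x : Fin N → ℝ) - (y : Fin N → ℝ))) := by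
      refine ⟨((N : ℕ) : ℝ) ^ (1/q), ?_⟩
      rintro r ⟨x, rfl⟩
      refine le_trans (ciInf_le (hinf_nonneg L x) (⟨0, L.zero_mem⟩ : ↥L)) ?_
      have : ((Finset.univ : Finset (Fin N)).card : ℝ) ^ (1/q) = ((N : ℕ) : ℝ) ^ (1/q) := by
        congr 2
        simp
      rw [← this]
      apply lqNorm_le hq
      · intro j; simpa using x.2 j
      · intro j hj; exact absurd (Finset.mem_univ j) hj
    refine le_ciSup_of_le hbddA ⟨x₀, hx₀C⟩ ?_
    apply le_ciInf
    rintro ⟨y, hy⟩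
    apply key_lower hq f _ hf1 _ hsum
    have hperp : ∑ j, f j * y j = 0 := hFperp f hfF y hy
    calc ∑ j, |f j| = ∑ j, f j * x₀ j := by
          exact (Finset.sum_congr rfl fun j _ => (hfx₀ j).symm)
      _ = ∑ j, f j * x₀ j - ∑ j, f j * y j := by rw [hperp]; ring
      _ = ∑ j, (f j * x₀ j - f j * y j) := (Finset.sum_sub_distrib _ _).symm
      _ = ∑ j, f j * (x₀ j - y j) := Finset.sum_congr rfl fun j _ => by ring
end
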